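/- arXiv:2512.08800 — 3 statements merged into one kernel-verified Lean document; each statement's English description precedes it below -/
import Mathlib

section
/- For every p ∈ (0,1), the Perron–Frobenius eigenvalue satisfies the two-sided bound (1-p)^{2/3} ≤ λ_PF(p) ≤ (3/2)·√(1-p). -/
open Real Set

noncomputable def lamPF (p : ℝ) : ℝ := (1 - p + Real.sqrt ((1 - p) * (3 * p + 1))) / 2

theorem lamPF_two_sided_bound (p : ℝ) (hp : p ∈ Ioo (0 : ℝ) 1) :
    (1 - p) ^ ((2 : ℝ) / 3) ≤ lamPF p ∧ lamPF p ≤ (3 / 2) * Real.sqrt (1 - p) := by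
  obtain ⟨hp0, hp1⟩ := hp
  have hq : (0:ℝ) < 1 - p := by linarith
  have hq1 : 1 - p < 1 := by linarith
  constructor
  · -- lower bound
    set t : ℝ := (1 - p) ^ ((1:ℝ)/3) with ht
    have ht0 : 0 < t := Real.rpow_pos_of_pos hq _
    have ht1 : t < 1 := by
      have := Real.rpow_lt_one hq.le hq1 (by norm_num : (0:ℝ) < (1:ℝ)/3)
      simpa [ht] using this
    have ht3 : t ^ 3 = 1 - p := by
      rw [ht, ← Real.rpow_natCast ((1 - p) ^ ((1:ℝ)/3)) 3, ← Real.rpow_mul hq.le]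
      norm_num
    have ht2 : (1 - p) ^ ((2:ℝ)/3) = t ^ 2 := by
      rw [ht, ← Real.rpow_natCast ((1 - p) ^ ((1:ℝ)/3)) 2, ← Real.rpow_mul hq.le]
      norm_num
    have harg : (1 - p) * (3 * p + 1) = t ^ 3 * (4 - 3 * t ^ 3) := by
      rw [ht3]; ring
    have hargnn : 0 ≤ t ^ 3 * (4 - 3 * t ^ 3) := by nlinarith
    have hsq : Real.sqrt (t ^ 3 * (4 - 3 * t ^ 3)) ^ 2 = t ^ 3 * (4 - 3 * t ^ 3) :=
      Real.sq_sqrt hargnn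
    have hsnn : 0 ≤ Real.sqrt (t ^ 3 * (4 - 3 * t ^ 3)) := Real.sqrt_nonneg _
    have key : 2 * t ^ 2 - t ^ 3 ≤ Real.sqrt (t ^ 3 * (4 - 3 * t ^ 3)) := by
      nlinarith [sq_nonneg (Real.sqrt (t ^ 3 * (4 - 3 * t ^ 3)) - (2 * t ^ 2 - t ^ 3)),
        mul_pos (mul_pos ht0 ht0) ht0, sq_nonneg t, sq_nonneg (1 - t),
        mul_nonneg (mul_nonneg (mul_nonneg ht0.le ht0.le) ht0.le)
          (mul_nonneg (sub_nonneg.2 ht1.le) (by positivity : (0:ℝ) ≤ 1 + t ^ 2))]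
    rw [lamPF, ht2, harg, ← ht3]
    linarith
  · -- upper bound
    set s : ℝ := Real.sqrt (1 - p) with hs
    have hs0 : 0 < s := Real.sqrt_pos.2 hq
    have hs1 : s < 1 := by
      rw [hs]
      nlinarith [Real.sq_sqrt hq.le, Real.sqrt_nonneg (1-p)]
    have hs2 : s ^ 2 = 1 - p := Real.sq_sqrt hq.le
    have harg : (1 - p) * (3 * p + 1) = s ^ 2 * (4 - 3 * s ^ 2) := by
      rw [hs2]; ring
    have hkey : Real.sqrt (s ^ 2 * (4 - 3 * s ^ 2)) ≤ 3 * s - s ^ 2 := by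
      have h1 : s ^ 2 * (4 - 3 * s ^ 2) ≤ (3 * s - s ^ 2) ^ 2 := by nlinarith [sq_nonneg s]
      calc Real.sqrt (s ^ 2 * (4 - 3 * s ^ 2)) ≤ Real.sqrt ((3 * s - s ^ 2) ^ 2) :=
            Real.sqrt_le_sqrt h1
        _ = |3 * s - s ^ 2| := Real.sqrt_sq_eq_abs _
        _ = 3 * s - s ^ 2 := abs_of_nonneg (by nlinarith)
    rw [lamPF, harg, ← hs2]
    linarith
end

section
/- For every p ∈ (0,1), every x, y ∈ {0,1}, and every integer i, the ratio Q^{n+i}(x_n, x) / Q^n(x_n, y) converges as n → ∞ to λ_PF^i · v_PF(x)/v_PF(y), uniformly in (i.e., for every) sequence (x_n) with values in {0,1}, where v_PF(0) = λ_PF/√(p(1-p)) and v_PF(1) = 1. -/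
open Real Set Filter Topology

noncomputable def Qmat (p : ℝ) : Matrix (Fin 2) (Fin 2) ℝ :=
  !![1 - p, Real.sqrt (p * (1 - p)); Real.sqrt (p * (1 - p)), 0]

noncomputable def vPF (p : ℝ) : Fin 2 → ℝ :=
  ![lamPF p / Real.sqrt (p * (1 - p)), 1]

noncomputable def muPF (p : ℝ) : ℝ := (1 - p - Real.sqrt ((1 - p) * (3 * p + 1))) / 2

noncomputable def Amat (p : ℝ) : Matrix (Fin 2) (Fin 2) ℝ :=
  !![lamPF p, Real.sqrt (p * (1 - p)); Real.sqrt (p * (1 - p)), -muPF p]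

noncomputable def Bmat (p : ℝ) : Matrix (Fin 2) (Fin 2) ℝ :=
  !![-muPF p, -Real.sqrt (p * (1 - p)); -Real.sqrt (p * (1 - p)), lamPF p]

section facts
variable {p : ℝ}

lemma s_sq (hp : p ∈ Ioo (0 : ℝ) 1) : Real.sqrt (p * (1 - p)) ^ 2 = p * (1 - p) := by
  obtain ⟨h0, h1⟩ := id hp
  exact Real.sq_sqrt (by nlinarith)

lemma s_pos (hp : p ∈ Ioo (0 : ℝ) 1) : 0 < Real.sqrt (p * (1 - p)) := by
  obtain ⟨h0, h1⟩ := id hp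
  exact Real.sqrt_pos.mpr (by nlinarith)

lemma D_sq (hp : p ∈ Ioo (0 : ℝ) 1) :
    Real.sqrt ((1 - p) * (3 * p + 1)) ^ 2 = (1 - p) * (3 * p + 1) := by
  obtain ⟨h0, h1⟩ := id hp
  exact Real.sq_sqrt (by nlinarith)

lemma D_pos (hp : p ∈ Ioo (0 : ℝ) 1) : 0 < Real.sqrt ((1 - p) * (3 * p + 1)) := by
  obtain ⟨h0, h1⟩ := id hp
  exact Real.sqrt_pos.mpr (by nlinarith)

lemma D_gt (hp : p ∈ Ioo (0 : ℝ) 1) : 1 - p < Real.sqrt ((1 - p) * (3 * p + 1)) := by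
  obtain ⟨h0, h1⟩ := id hp
  nlinarith [D_sq hp, D_pos hp]

lemma lam_pos (hp : p ∈ Ioo (0 : ℝ) 1) : 0 < lamPF p := by
  obtain ⟨h0, h1⟩ := id hp
  have := D_pos hp
  unfold lamPF; linarith

lemma mu_neg (hp : p ∈ Ioo (0 : ℝ) 1) : muPF p < 0 := by
  have := D_gt hp
  unfold muPF; linarith

lemma mu_gt (hp : p ∈ Ioo (0 : ℝ) 1) : -lamPF p < muPF p := by
  obtain ⟨h0, h1⟩ := id hp
  unfold lamPF muPF; linarith

lemma lam_sub_mu : lamPF p - muPF p = Real.sqrt ((1 - p) * (3 * p + 1)) := by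
  unfold lamPF muPF; ring

lemma lam_add_mu : lamPF p + muPF p = 1 - p := by
  unfold lamPF muPF; ring

lemma lam_mul_mu (hp : p ∈ Ioo (0 : ℝ) 1) : lamPF p * muPF p = -(p * (1 - p)) := by
  have h1 := D_sq hp
  unfold lamPF muPF; nlinarith

lemma lam_quad (hp : p ∈ Ioo (0 : ℝ) 1) :
    lamPF p ^ 2 = (1 - p) * lamPF p + p * (1 - p) := by
  have h1 := D_sq hp
  unfold lamPF; nlinarith

lemma mu_quad (hp : p ∈ Ioo (0 : ℝ) 1) :
    muPF p ^ 2 = (1 - p) * muPF p + p * (1 - p) := by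
  have h1 := D_sq hp
  unfold muPF; nlinarith

lemma AB_one : Amat p + Bmat p = Real.sqrt ((1 - p) * (3 * p + 1)) • 1 := by
  ext i j
  fin_cases i <;> fin_cases j <;>
    simp [Amat, Bmat, Matrix.one_apply, Matrix.smul_apply, smul_eq_mul]
  · linear_combination lam_sub_mu (p := p)
  · linear_combination lam_sub_mu (p := p)

lemma AQ (hp : p ∈ Ioo (0 : ℝ) 1) : Amat p * Qmat p = lamPF p • Amat p := by
  ext i j
  fin_cases i <;> fin_cases j <;>
    simp [Amat, Qmat, Matrix.mul_apply, Fin.sum_univ_two, Matrix.smul_apply, smul_eq_mul]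
  · linear_combination s_sq hp - lam_quad hp
  · linear_combination (-Real.sqrt (p * (1 - p))) * lam_add_mu (p := p)
  · linear_combination s_sq hp + lam_mul_mu hp

lemma BQ (hp : p ∈ Ioo (0 : ℝ) 1) : Bmat p * Qmat p = muPF p • Bmat p := by
  ext i j
  fin_cases i <;> fin_cases j <;>
    simp [Bmat, Qmat, Matrix.mul_apply, Fin.sum_univ_two, Matrix.smul_apply, smul_eq_mul]
  · linear_combination mu_quad hp - s_sq hp
  · linear_combination Real.sqrt (p * (1 - p)) * lam_add_mu (p := p)
  · linear_combination -s_sq hp - lam_mul_mu hp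

lemma Q_pow (hp : p ∈ Ioo (0 : ℝ) 1) (n : ℕ) :
    Real.sqrt ((1 - p) * (3 * p + 1)) • Qmat p ^ n =
      lamPF p ^ n • Amat p + muPF p ^ n • Bmat p := by
  induction n with
  | zero => simpa using (AB_one (p := p)).symm
  | succ n ih =>
      rw [pow_succ, ← Matrix.smul_mul, ih, Matrix.add_mul, Matrix.smul_mul, Matrix.smul_mul,
        AQ hp, BQ hp, smul_smul, smul_smul, ← pow_succ, ← pow_succ]

lemma Q_pow_apply (hp : p ∈ Ioo (0 : ℝ) 1) (n : ℕ) (u v : Fin 2) :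
    (Qmat p ^ n) u v =
      (lamPF p ^ n * Amat p u v + muPF p ^ n * Bmat p u v) /
        Real.sqrt ((1 - p) * (3 * p + 1)) := by
  have h := congrFun (congrFun (Q_pow hp n) u) v
  simp only [Matrix.smul_apply, Matrix.add_apply, smul_eq_mul] at h
  rw [eq_div_iff (D_pos hp).ne']
  linarith [h]

end facts

section main
variable {p : ℝ}

lemma A_pos (hp : p ∈ Ioo (0 : ℝ) 1) (u v : Fin 2) : 0 < Amat p u v := by
  have hL := lam_pos hp
  have hM := mu_neg hp
  have hs := s_pos hp
  fin_cases u <;> fin_cases v <;> simp [Amat] <;> nlinarith [hp.1, hp.2]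

lemma v_pos (hp : p ∈ Ioo (0 : ℝ) 1) (w : Fin 2) : 0 < vPF p w := by
  fin_cases w
  · exact div_pos (lam_pos hp) (s_pos hp)
  · norm_num [vPF]

lemma Av (hp : p ∈ Ioo (0 : ℝ) 1) (u a b : Fin 2) :
    Amat p u a * vPF p b = Amat p u b * vPF p a := by
  have hs := (s_pos hp).ne'
  fin_cases u <;> fin_cases a <;> fin_cases b <;>
    simp [Amat, vPF] <;> field_simp <;>
    first
      | ring1
      | linear_combination s_sq hp + lam_mul_mu hp
      | linear_combination (-2 : ℝ) * s_sq hp + (-2 : ℝ) * lam_mul_mu hp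
      | linear_combination (2 : ℝ) * s_sq hp + (2 : ℝ) * lam_mul_mu hp
      | linear_combination -s_sq hp - lam_mul_mu hp

end main

theorem Qmat_pow_ratio_limit (p : ℝ) (hp : p ∈ Ioo (0 : ℝ) 1) (x y : Fin 2) (i : ℤ)
    (xs : ℕ → Fin 2) :
    Tendsto (fun n : ℕ => (Qmat p ^ (((n : ℤ) + i).toNat)) (xs n) x / (Qmat p ^ n) (xs n) y)
      atTop (nhds (lamPF p ^ i * vPF p x / vPF p y)) := by
  have hL := lam_pos hp
  have hM := mu_neg hp
  have hMgt := mu_gt hp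
  set ρ : ℝ := muPF p / lamPF p with hρdef
  have habs : |ρ| < 1 := by
    rw [hρdef, abs_div, abs_of_pos hL, abs_of_neg hM, div_lt_one hL]; linarith
  have hρabs : Tendsto (fun n : ℕ => |ρ| ^ n) atTop (nhds 0) :=
    tendsto_pow_atTop_nhds_zero_of_abs_lt_one (by rwa [abs_abs])
  set g : ℕ → ℝ := fun n => ρ ^ n * (muPF p ^ i * Bmat p (xs n) x / Amat p (xs n) y)
    with hgdef
  set h : ℕ → ℝ := fun n => ρ ^ n * (Bmat p (xs n) y / Amat p (xs n) y) with hhdef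
  have key : ∀ c : Fin 2 → ℝ,
      Tendsto (fun n : ℕ => ρ ^ n * c (xs n)) atTop (nhds 0) := by
    intro c
    set C : ℝ := max |c 0| |c 1| with hCdef
    have hbound : ∀ u : Fin 2, |c u| ≤ C := by
      intro u; fin_cases u
      · exact le_max_left _ _
      · exact le_max_right _ _
    apply squeeze_zero_norm (a := fun n => |ρ| ^ n * C)
    · intro n
      rw [Real.norm_eq_abs, abs_mul, abs_pow]
      exact mul_le_mul_of_nonneg_left (hbound (xs n)) (pow_nonneg (abs_nonneg _) n)
    · simpa using hρabs.mul_const C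
  have hg : Tendsto g atTop (nhds 0) := key (fun u => muPF p ^ i * Bmat p u x / Amat p u y)
  have hh : Tendsto h atTop (nhds 0) := key (fun u => Bmat p u y / Amat p u y)
  have hF : Tendsto (fun n => (lamPF p ^ i * (vPF p x / vPF p y) + g n) / (1 + h n)) atTop
      (nhds (lamPF p ^ i * vPF p x / vPF p y)) := by
    have hc : Tendsto (fun _ : ℕ => lamPF p ^ i * (vPF p x / vPF p y)) atTop
        (nhds (lamPF p ^ i * (vPF p x / vPF p y))) := tendsto_const_nhds
    have hone : Tendsto (fun _ : ℕ => (1 : ℝ)) atTop (nhds 1) := tendsto_const_nhds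
    have := (hc.add hg).div (hone.add hh) (by norm_num : (1 : ℝ) + 0 ≠ 0)
    rw [add_zero, add_zero, div_one] at this
    rw [mul_div_assoc]
    exact this
  apply Tendsto.congr' _ hF
  filter_upwards [eventually_ge_atTop i.natAbs] with n hn
  set u := xs n with hu
  set t : ℕ := ((n : ℤ) + i).toNat with ht
  have hni : ((t : ℤ)) = (n : ℤ) + i := Int.toNat_of_nonneg (by omega)
  have hLt : lamPF p ^ t = lamPF p ^ n * lamPF p ^ i := by
    rw [← zpow_natCast (lamPF p) t, hni, zpow_add₀ hL.ne', zpow_natCast]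
  have hMt : muPF p ^ t = muPF p ^ n * muPF p ^ i := by
    rw [← zpow_natCast (muPF p) t, hni, zpow_add₀ hM.ne, zpow_natCast]
  have hAy := (A_pos hp u y).ne'
  have hvy := (v_pos hp y).ne'
  have hax : Amat p u x = Amat p u y * vPF p x / vPF p y := by
    field_simp
    linear_combination Av hp u x y
  have hnum : lamPF p ^ n * lamPF p ^ i * Amat p u x + muPF p ^ n * muPF p ^ i * Bmat p u x
      = (lamPF p ^ n * Amat p u y) * (lamPF p ^ i * (vPF p x / vPF p y) + g n) := by
    rw [hax, hgdef]
    simp only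
    rw [hρdef, div_pow]
    rw [← hu]
    field_simp
  have hden : lamPF p ^ n * Amat p u y + muPF p ^ n * Bmat p u y
      = (lamPF p ^ n * Amat p u y) * (1 + h n) := by
    rw [hhdef]
    simp only
    rw [hρdef, div_pow]
    rw [← hu]
    field_simp
  have hne : lamPF p ^ n * Amat p u y ≠ 0 :=
    mul_ne_zero (pow_ne_zero n hL.ne') hAy
  rw [Q_pow_apply hp t u x, Q_pow_apply hp n u y, hLt, hMt, div_div_div_comm,
    div_self (D_pos hp).ne', div_one, hnum, hden, mul_div_mul_left _ _ hne]
end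

section
/- For every p ∈ (0,1) and all integers m ≥ 2, the (0,0)-entry of Q^m satisfies Q^m(0,0)/(1-p) ≤ λ_PF^{m-2}, where λ_PF = (1/2)(1-p+√((1-p)(3p+1))). -/
open Real Set

lemma Qrec (p : ℝ) (hp0 : 0 ≤ p) (hp1 : p ≤ 1) (k : ℕ) :
    (Qmat p ^ (k+2)) 0 0 = (1-p) * (Qmat p ^ (k+1)) 0 0 + p*(1-p) * (Qmat p ^ k) 0 0 := by
  have hs : Real.sqrt (p*(1-p)) * Real.sqrt (p*(1-p)) = p*(1-p) :=
    Real.mul_self_sqrt (by nlinarith)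
  have q00 : Qmat p 0 0 = 1 - p := rfl
  have q01 : Qmat p 0 1 = Real.sqrt (p*(1-p)) := rfl
  have q10 : Qmat p 1 0 = Real.sqrt (p*(1-p)) := rfl
  have q11 : Qmat p 1 1 = 0 := rfl
  have h1 : (Qmat p ^ (k+1)) 0 1 = (Qmat p ^ k) 0 0 * Real.sqrt (p*(1-p)) := by
    rw [pow_succ]
    simp only [Matrix.mul_apply, Fin.sum_univ_two, q01, q11]
    ring
  rw [show k+2 = (k+1)+1 from rfl, pow_succ]
  simp only [Matrix.mul_apply, Fin.sum_univ_two, q00, q10]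
  rw [h1, mul_assoc ((Qmat p ^ k) 0 0), hs]
  ring

theorem Qmat_pow_entry_bound (p : ℝ) (hp : p ∈ Ioo (0 : ℝ) 1) (m : ℕ) (hm : 2 ≤ m) :
    (Qmat p ^ m) 0 0 / (1 - p) ≤ lamPF p ^ (m - 2) := by
  obtain ⟨hp0, hp1⟩ := hp
  have hp0' : (0:ℝ) ≤ p := le_of_lt hp0
  have hp1' : p ≤ 1 := le_of_lt hp1
  have h1p : (0:ℝ) < 1 - p := by linarith
  have hsq : Real.sqrt ((1-p)*(3*p+1)) ^ 2 = (1-p)*(3*p+1) :=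
    Real.sq_sqrt (by nlinarith)
  have hlam0 : 0 ≤ lamPF p := by
    unfold lamPF
    have := Real.sqrt_nonneg ((1-p)*(3*p+1))
    linarith
  have hlam2 : lamPF p ^ 2 = (1-p) * lamPF p + p*(1-p) := by
    unfold lamPF
    unfold lamPF at hsq
    nlinarith [hsq]
  -- base values
  have a0 : (Qmat p ^ 0) 0 0 = 1 := by simp [Matrix.one_apply]
  have a1 : (Qmat p ^ 1) 0 0 = 1 - p := by simp [Qmat]
  have a2 : (Qmat p ^ 2) 0 0 = 1 - p := by
    have h := Qrec p hp0' hp1' 0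
    norm_num at h
    rw [h, show Qmat p 0 0 = 1 - p from rfl]; ring
  have a3 : (Qmat p ^ 3) 0 0 = (1-p)^2 * (1+p) := by
    have h := Qrec p hp0' hp1' 1
    norm_num at h
    rw [h, a2, show Qmat p 0 0 = 1 - p from rfl]; ring
  -- key inequality for the second base case
  have hkey : (1-p)*(1+p) ≤ lamPF p := by
    have hx : (0:ℝ) < (1-p)*(1+2*p) := by nlinarith
    have hle : (1-p)*(1+2*p) ≤ Real.sqrt ((1-p)*(3*p+1)) := by
      have := Real.sqrt_sq hx.le
      rw [← this]
      apply Real.sqrt_le_sqrt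
      nlinarith [pow_pos hp0 3, sq_nonneg p]
    unfold lamPF
    nlinarith
  have main : ∀ n : ℕ, (Qmat p ^ (n+2)) 0 0 ≤ (1-p) * lamPF p ^ n ∧
      (Qmat p ^ (n+3)) 0 0 ≤ (1-p) * lamPF p ^ (n+1) := by
    intro n
    induction n with
    | zero =>
      constructor
      · rw [a2]; simp
      · rw [show (0:ℕ)+3 = 3 from rfl, a3]
        have := mul_le_mul_of_nonneg_left hkey h1p.le
        norm_num
        nlinarith
    | succ k ih =>
      refine ⟨ih.2, ?_⟩
      have e : lamPF p ^ (k+2) = (1-p) * lamPF p ^ (k+1) + p*(1-p) * lamPF p ^ k := by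
        calc lamPF p ^ (k+2) = lamPF p ^ k * lamPF p ^ 2 := by ring
        _ = lamPF p ^ k * ((1-p) * lamPF p + p*(1-p)) := by rw [hlam2]
        _ = (1-p) * lamPF p ^ (k+1) + p*(1-p) * lamPF p ^ k := by ring
      rw [show k+1+3 = (k+2)+2 from rfl, Qrec p hp0' hp1' (k+2), show k+1+1 = k+2 from rfl, e]
      have hpp : (0:ℝ) ≤ p*(1-p) := by nlinarith
      have i1 := ih.2
      have i0 := ih.1
      nlinarith [mul_le_mul_of_nonneg_left i1 h1p.le, mul_le_mul_of_nonneg_left i0 hpp,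
        mul_le_mul_of_nonneg_left ih.2 h1p.le]
  obtain ⟨n, rfl⟩ : ∃ n, m = n + 2 := ⟨m - 2, by omega⟩
  rw [div_le_iff₀ h1p, show n + 2 - 2 = n from by omega]
  have := (main n).1
  linarith
end
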